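/- Let n ≥ 2, let x be an invertible totally nonnegative n×n real matrix, and let i ∈ {1, …, n−1}. Then x_{i,i+1} > 0 if and only if there exist indices k ≤ i < l with x_{k,l} ≠ 0 (i.e., if and only if x is not block-lower-triangular with respect to the partition {1, …, i}, {i+1, …, n}). Likewise, x_{i+1,i} > 0 if and only if there exist indices k ≤ i < l with x_{l,k} ≠ 0. -/

import Mathlib

open Matrix

/-- A square real matrix is totally nonnegative if every minor (determinant of a
square submatrix selected by strictly increasing row and column indices) is nonnegative. -/
def TotallyNonneg {n : ℕ} (x : Matrix (Fin n) (Fin n) ℝ) : Prop :=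
  ∀ (k : ℕ) (f g : Fin k → Fin n), StrictMono f → StrictMono g →
    0 ≤ (x.submatrix f g).det

lemma TotallyNonneg.entry {n : ℕ} {x : Matrix (Fin n) (Fin n) ℝ} (h : TotallyNonneg x)
    (a b : Fin n) : 0 ≤ x a b := by
  have h1 : StrictMono (fun _ : Fin 1 => a) := fun u v huv =>
    (huv.ne (Subsingleton.elim u v)).elim
  have h2 : StrictMono (fun _ : Fin 1 => b) := fun u v huv =>
    (huv.ne (Subsingleton.elim u v)).elim
  have := h 1 _ _ h1 h2
  simpa [Matrix.det_fin_one] using this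

lemma strictMono_pair {n : ℕ} {a b : Fin n} (hab : a < b) :
    StrictMono (fun u : Fin 2 => if u = 0 then a else b) := by
  intro u v huv
  have h1 : (u : ℕ) < (v : ℕ) := huv
  have h2 : (v : ℕ) < 2 := v.isLt
  have hu : u = 0 := Fin.ext (by omega)
  have hv : v = 1 := Fin.ext (by omega)
  subst hu; subst hv
  simpa using hab

lemma TotallyNonneg.minor2 {n : ℕ} {x : Matrix (Fin n) (Fin n) ℝ} (h : TotallyNonneg x)
    {a b c d : Fin n} (hab : a < b) (hcd : c < d) :
    x a d * x b c ≤ x a c * x b d := by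
  have := h 2 (fun u : Fin 2 => if u = 0 then a else b)
    (fun u : Fin 2 => if u = 0 then c else d) (strictMono_pair hab) (strictMono_pair hcd)
  rw [Matrix.det_fin_two] at this
  simp only [Matrix.submatrix_apply] at this
  norm_num at this
  linarith

lemma TotallyNonneg.transpose {n : ℕ} {x : Matrix (Fin n) (Fin n) ℝ}
    (h : TotallyNonneg x) : TotallyNonneg xᵀ := by
  intro k f g hf hg
  rw [← Matrix.transpose_submatrix, Matrix.det_transpose]
  exact h k g f hg hf

/-- If a TNN matrix has a row vanishing from the diagonal on, its determinant is zero. -/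
lemma TotallyNonneg.det_eq_zero_of_row {n : ℕ} {x : Matrix (Fin n) (Fin n) ℝ}
    (h : TotallyNonneg x) (j : Fin n) (hrow : ∀ d : Fin n, j ≤ d → x j d = 0) :
    x.det = 0 := by
  by_cases hb : ∀ b, x j b = 0
  · exact Matrix.det_eq_zero_of_row_eq_zero j hb
  · push_neg at hb
    obtain ⟨b0, hb0⟩ := hb
    have hb0j : b0 < j := by
      by_contra hc
      push_neg at hc
      exact hb0 (hrow b0 hc)
    have hblock : ∀ a d : Fin n, a ≤ j → j ≤ d → x a d = 0 := by
      intro a d ha hd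
      rcases eq_or_lt_of_le ha with rfl | haj
      · exact hrow d hd
      · have hm := h.minor2 haj (lt_of_lt_of_le hb0j hd)
        rw [hrow d hd, mul_zero] at hm
        have h0 : x a d * x j b0 = 0 :=
          le_antisymm hm (mul_nonneg (h.entry a d) (h.entry j b0))
        exact (mul_eq_zero.mp h0).resolve_right hb0
    rw [Matrix.det_apply]
    refine Finset.sum_eq_zero fun σ _ => ?_
    obtain ⟨ii, hii, hσii⟩ : ∃ ii : Fin n, j ≤ ii ∧ σ ii ≤ j := by
      by_contra hc
      push_neg at hc
      have hmaps : ∀ a ∈ Finset.Ici j, σ a ∈ Finset.Ioi j := by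
        intro a ha
        rw [Finset.mem_Ioi]
        exact hc a (Finset.mem_Ici.mp ha)
      have hcard := Finset.card_le_card_of_injOn σ hmaps σ.injective.injOn
      rw [Fin.card_Ici, Fin.card_Ioi] at hcard
      have := j.isLt
      omega
    have hz : (∏ i, x (σ i) i) = 0 :=
      Finset.prod_eq_zero (Finset.mem_univ ii) (hblock _ _ hσii hii)
    rw [hz, smul_zero]

lemma TotallyNonneg.diag_pos {n : ℕ} {x : Matrix (Fin n) (Fin n) ℝ} (hx : IsUnit x)
    (h : TotallyNonneg x) (j : Fin n) : 0 < x j j := by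
  rcases (h.entry j j).lt_or_eq with hlt | heq
  · exact hlt
  exfalso
  have hdet : x.det ≠ 0 := by
    intro h0
    rw [Matrix.isUnit_iff_isUnit_det, h0] at hx
    simp at hx
  have step1 : ∀ c d : Fin n, j < c → j < d → x j d * x c j = 0 := by
    intro c d hc hd
    have hm := h.minor2 hc hd
    rw [← heq, zero_mul] at hm
    exact le_antisymm hm (mul_nonneg (h.entry j d) (h.entry c j))
  by_cases hA : ∀ d, j < d → x j d = 0
  · refine hdet (h.det_eq_zero_of_row j fun d hd => ?_)
    rcases eq_or_lt_of_le hd with rfl | hd'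
    · exact heq.symm
    · exact hA d hd'
  · push_neg at hA
    obtain ⟨d0, hd0, hxd0⟩ := hA
    have hcol : ∀ c, j < c → x c j = 0 := fun c hc =>
      (mul_eq_zero.mp (step1 c d0 hc hd0)).resolve_left hxd0
    have hT : xᵀ.det = 0 := by
      refine h.transpose.det_eq_zero_of_row j fun d hd => ?_
      rcases eq_or_lt_of_le hd with rfl | hd'
      · exact heq.symm
      · exact hcol d hd'
    rw [Matrix.det_transpose] at hT
    exact hdet hT

lemma TotallyNonneg.key {n : ℕ} (x : Matrix (Fin n) (Fin n) ℝ) (hx : IsUnit x)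
    (htnn : TotallyNonneg x) (i : ℕ) (hi : i + 1 < n) :
    0 < x ⟨i, Nat.lt_of_succ_lt hi⟩ ⟨i + 1, hi⟩ ↔
      ∃ k l : Fin n, (k : ℕ) ≤ i ∧ i < (l : ℕ) ∧ x k l ≠ 0 := by
  constructor
  · intro hpos
    exact ⟨⟨i, by omega⟩, ⟨i + 1, hi⟩, le_refl _, by simp, ne_of_gt hpos⟩
  · rintro ⟨k, l, hk, hl, hkl⟩
    have hkl' : 0 < x k l := (htnn.entry k l).lt_of_ne (Ne.symm hkl)
    have hd0 := htnn.diag_pos hx (⟨i, by omega⟩ : Fin n)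
    have hd1 := htnn.diag_pos hx (⟨i + 1, hi⟩ : Fin n)
    have hi0l : (⟨i, by omega⟩ : Fin n) < l := by rw [Fin.lt_def]; exact hl
    have hi01 : (⟨i, by omega⟩ : Fin n) < (⟨i + 1, hi⟩ : Fin n) := by
      exact Fin.mk_lt_mk.mpr (Nat.lt_succ_self i)
    have h1 : 0 < x ⟨i, by omega⟩ l := by
      rcases eq_or_lt_of_le (show k ≤ (⟨i, by omega⟩ : Fin n) by
        rw [Fin.le_def]; exact hk) with heq | hki0
      · exact heq ▸ hkl'
      · have hm := htnn.minor2 hki0 hi0l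
        nlinarith [htnn.entry k ⟨i, by omega⟩, htnn.entry (⟨i, by omega⟩ : Fin n) l]
    rcases eq_or_lt_of_le (show (⟨i + 1, hi⟩ : Fin n) ≤ l by
      rw [Fin.le_def]; exact hl) with heq | hi1l
    · rwa [heq]
    · have hm := htnn.minor2 hi01 hi1l
      nlinarith [htnn.entry (⟨i, by omega⟩ : Fin n) ⟨i + 1, hi⟩,
        htnn.entry (⟨i + 1, hi⟩ : Fin n) l]

/-- For an invertible totally nonnegative matrix `x` and any `i` (here 0-indexed,
so `i` ranges over `0, …, n-2`, corresponding to the 1-indexed `i+1 ∈ {1, …, n-1}`):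
the superdiagonal entry `x_{i,i+1}` is positive iff `x` has a nonzero entry strictly
above the block cut after row/column `i`, and the subdiagonal entry `x_{i+1,i}` is
positive iff `x` has a nonzero entry strictly below that cut. -/
theorem stmt7 (n : ℕ) (hn : 2 ≤ n) (x : Matrix (Fin n) (Fin n) ℝ)
    (hx : IsUnit x) (htnn : TotallyNonneg x) (i : ℕ) (hi : i + 1 < n) :
    (0 < x ⟨i, by omega⟩ ⟨i + 1, hi⟩ ↔
        ∃ k l : Fin n, (k : ℕ) ≤ i ∧ i < (l : ℕ) ∧ x k l ≠ 0) ∧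
    (0 < x ⟨i + 1, hi⟩ ⟨i, by omega⟩ ↔
        ∃ k l : Fin n, (k : ℕ) ≤ i ∧ i < (l : ℕ) ∧ x l k ≠ 0) := by
  have hxT : IsUnit xᵀ :=
    (Matrix.isUnit_iff_isUnit_det xᵀ).mpr
      (by rw [Matrix.det_transpose]; exact (Matrix.isUnit_iff_isUnit_det x).mp hx)
  exact ⟨TotallyNonneg.key x hx htnn i hi, TotallyNonneg.key xᵀ hxT htnn.transpose i hi⟩
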